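/- There is no graphic matroid N (on any type) for which there exists an online matroid embedding of the class of all graphic matroids into N. In fact this already fails for the class of graphic matroids with at most 6 elements. -/

import Mathlib

open Set

/-- The rank of a set in a matroid: the supremum of the cardinalities of its
independent subsets. -/
noncomputable def mRank {α : Type*} (M : Matroid α) (S : Set α) : ℕ∞ :=
  ⨆ I ∈ {I : Set α | M.Indep I ∧ I ⊆ S}, I.encard

/-- The rank of a set of vectors: the dimension of its linear span. -/
noncomputable def spanRank (K : Type*) [Field K] {W : Type*} [AddCommGroup W] [Module K W]
    (S : Set W) : ℕ :=
  Module.finrank K (Submodule.span K S)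

/-- The `k`-prefix of an ordered matroid on `Fin m`: its restriction to the
first `k` elements, viewed as a matroid on `Fin k`. -/
def prefixMatroid {k m : ℕ} (h : k ≤ m) (M : Matroid (Fin m)) : Matroid (Fin k) :=
  M.comap (Fin.castLE h)

/-- An online matroid morphism (OMM) of the class `P` of ordered matroids into the host
matroid `N`: a rank-preserving map for each matroid of the class, consistent on prefixes. -/
def OMMof (P : (m : ℕ) → Matroid (Fin m) → Prop) {β : Type*} (N : Matroid β) : Prop :=
  ∃ f : (m : ℕ) → Matroid (Fin m) → (Fin m → β),
    (∀ m (M : Matroid (Fin m)), P m M →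
      ∀ S : Set (Fin m), S ⊆ M.E → mRank N (f m M '' S) = mRank M S) ∧
    (∀ k m (hkm : k ≤ m) (M : Matroid (Fin m)), P m M →
      ∀ i : Fin k, f k (prefixMatroid hkm M) i = f m M (Fin.castLE hkm i))

/-- An online matroid embedding (OME): an online matroid morphism all of whose maps are
injective. -/
def OMEof (P : (m : ℕ) → Matroid (Fin m) → Prop) {β : Type*} (N : Matroid β) : Prop :=
  ∃ f : (m : ℕ) → Matroid (Fin m) → (Fin m → β),
    (∀ m (M : Matroid (Fin m)), P m M → Function.Injective (f m M)) ∧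
    (∀ m (M : Matroid (Fin m)), P m M →
      ∀ S : Set (Fin m), S ⊆ M.E → mRank N (f m M '' S) = mRank M S) ∧
    (∀ k m (hkm : k ≤ m) (M : Matroid (Fin m)), P m M →
      ∀ i : Fin k, f k (prefixMatroid hkm M) i = f m M (Fin.castLE hkm i))

/-- A matroid is graphic if it admits a rank-preserving `𝔽₂` vertex-edge incidence
representation: each element is sent to the zero vector or to the sum of two distinct
standard basis vectors (a vector supported on exactly two vertices). -/
def IsGraphic {α : Type*} (M : Matroid α) : Prop :=
  ∃ (V : Type) (_ : Fintype V) (g : α → V → ZMod 2),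
    (∀ S : Set α, S ⊆ M.E → (spanRank (ZMod 2) (g '' S) : ℕ∞) = mRank M S) ∧
    ∀ e ∈ M.E, g e = 0 ∨ ∃ u v : V, u ≠ v ∧ {w | g e w ≠ 0} = {u, v}

/-!
Order the six edges of `K₄` in two ways whose five-element prefixes are the same ordered matroid
(`K₄` minus an edge) but whose sixth edge closes a triangle with different earlier edges. An online
morphism into a graphic host must place both orderings on the same first five images, so in the
host's incidence representation the images `a, b, c` of elements `0, 1, 3` make all seven nonzero
sums `a, b, c, a + b, a + c, b + c, a + b + c` edge vectors: the host would contain a Fano plane.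
It cannot: if `x`, `y` and `x + y` are edge vectors, the edges `x, y` share exactly one vertex, so
`x ⬝ᵥ y = 1`; but then `(a + b) ⬝ᵥ c = a ⬝ᵥ c + b ⬝ᵥ c = 0`.
-/

open Submodule Module

lemma mRank_eq_eRk {α : Type*} (M : Matroid α) (S : Set α) : mRank M S = M.eRk S := by
  refine le_antisymm (iSup₂_le fun I hI => hI.1.encard_le_eRk_of_subset hI.2) ?_
  obtain ⟨I, hI⟩ := M.exists_isBasis' S
  rw [← hI.encard_eq_eRk]
  exact le_iSup₂_of_le I ⟨hI.indep, hI.subset⟩ le_rfl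

def IsRankPreserving {α β : Type*} (M : Matroid α) (N : Matroid β) (F : α → β) : Prop :=
  ∀ S : Set α, S ⊆ M.E → mRank N (F '' S) = mRank M S

lemma Matroid.ext_eRk {α : Type*} [Finite α] {M₁ M₂ : Matroid α} (hE : M₁.E = M₂.E)
    (h : ∀ S, M₁.eRk S = M₂.eRk S) : M₁ = M₂ :=
  Matroid.ext_indep hE fun I _ => by
    rw [Matroid.indep_iff_eRk_eq_encard_of_finite I.toFinite,
      Matroid.indep_iff_eRk_eq_encard_of_finite I.toFinite, h]

lemma Matroid.mem_ground_of_eRk_singleton_ne_zero {α : Type*} {N : Matroid α} {y : α}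
    (h : N.eRk {y} ≠ 0) : y ∈ N.E := by
  by_contra hy
  exact h (by rw [← insert_empty_eq, N.eRk_insert_of_notMem_ground _ hy, N.eRk_empty])

lemma OMEof.toOMMof {P : (m : ℕ) → Matroid (Fin m) → Prop} {β : Type*} {N : Matroid β}
    (h : OMEof P N) : OMMof P N :=
  let ⟨f, _, hrank, hpref⟩ := h; ⟨f, hrank, hpref⟩

lemma OMMof.mono {P Q : (m : ℕ) → Matroid (Fin m) → Prop} {β : Type*} {N : Matroid β}
    (hPQ : ∀ m M, P m M → Q m M) (h : OMMof Q N) : OMMof P N :=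
  let ⟨f, hrank, hpref⟩ := h
  ⟨f, fun m M hM => hrank m M (hPQ m M hM), fun k m hkm M hM => hpref k m hkm M (hPQ m M hM)⟩

section LinearMatroid

variable {K W ι : Type*} [DivisionRing K] [AddCommGroup W] [Module K W]

lemma LinearIndepOn.ncard_eq_finrank_span {v : ι → W} {I : Set ι} (hI : LinearIndepOn K v I)
    (hfin : I.Finite) : I.ncard = finrank K (span K (v '' I)) := by
  have := hfin.fintype
  rw [Set.image_eq_range, finrank_span_eq_card hI, Set.ncard_eq_toFinset_card', Set.toFinset_card]

variable [Finite ι]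

variable (K) in
def linearMatroid (v : ι → W) : Matroid ι :=
  (IndepMatroid.ofFinite Set.finite_univ (LinearIndepOn K v) (linearIndepOn_empty K v)
    (fun _ _ hJ hIJ => hJ.mono hIJ)
    (by
      intro I J hI hJ hIJ
      by_contra! hcon
      have hJI : v '' J ⊆ span K (v '' I) := by
        rintro _ ⟨e, heJ, rfl⟩
        exact hI.mem_span_iff.2 fun hins => by_contra fun heI => hcon e heJ heI hins
      have := FiniteDimensional.span_of_finite K ((Set.toFinite I).image v)
      have hle := Submodule.finrank_mono (span_le.2 hJI)
      rw [← hI.ncard_eq_finrank_span (Set.toFinite I),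
        ← hJ.ncard_eq_finrank_span (Set.toFinite J)] at hle
      omega)
    (fun I _ => Set.subset_univ I)).matroid

@[simp] lemma linearMatroid_ground (v : ι → W) : (linearMatroid K v).E = univ := rfl

@[simp] lemma linearMatroid_indep_iff {v : ι → W} {I : Set ι} :
    (linearMatroid K v).Indep I ↔ LinearIndepOn K v I := Iff.rfl

lemma linearMatroid_eRk (v : ι → W) (S : Set ι) :
    (linearMatroid K v).eRk S = finrank K (span K (v '' S)) := by
  obtain ⟨I, hI⟩ := (linearMatroid K v).exists_isBasis' S
  have hIind : LinearIndepOn K v I := hI.indep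
  have hspan : span K (v '' I) = span K (v '' S) := by
    refine le_antisymm (span_mono (Set.image_mono hI.subset)) (span_le.2 ?_)
    rintro _ ⟨e, heS, rfl⟩
    exact hIind.mem_span_iff.2 fun hins => hI.mem_of_insert_indep heS hins
  rw [← hI.encard_eq_eRk, ← (Set.toFinite I).cast_ncard_eq,
    hIind.ncard_eq_finrank_span (Set.toFinite I), hspan]

lemma linearMatroid_comap {ι' : Type*} [Finite ι'] (v : ι → W) {φ : ι' → ι}
    (hφ : φ.Injective) : (linearMatroid K v).comap φ = linearMatroid K (v ∘ φ) := by
  refine Matroid.ext_indep rfl fun I _ => ?_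
  rw [Matroid.comap_indep_iff, linearMatroid_indep_iff, linearMatroid_indep_iff]
  exact ⟨fun h => h.1.comp_of_image h.2, fun h => ⟨h.image_of_comp, hφ.injOn⟩⟩

lemma prefixMatroid_linearMatroid {k m : ℕ} (h : k ≤ m) (v : Fin m → W) :
    prefixMatroid h (linearMatroid K v) = linearMatroid K (v ∘ Fin.castLE h) :=
  linearMatroid_comap v (Fin.castLE_injective h)

lemma linearMatroid_comp_linearMap {W' : Type*} [AddCommGroup W'] [Module K W'] (v : ι → W)
    {T : W →ₗ[K] W'} (hT : Function.Injective T) :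
    linearMatroid K (T ∘ v) = linearMatroid K v :=
  Matroid.ext_indep rfl fun _ _ => T.linearIndepOn_iff_of_injOn hT.injOn

end LinearMatroid

section ZModTwo

variable {W ι : Type*} [AddCommGroup W] [Module (ZMod 2) W]

lemma zmod_two_eq_zero_or_eq_one : ∀ a : ZMod 2, a = 0 ∨ a = 1 := by decide

lemma ZModModule.add_eq_zero_iff_eq {x y : W} : x + y = 0 ↔ x = y := by
  rw [← ZModModule.sub_eq_add, sub_eq_zero]

lemma linearIndepOn_pair_iff_zmod_two {v : ι → W} {i j : ι} (hij : i ≠ j) :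
    LinearIndepOn (ZMod 2) v {i, j} ↔ v i ≠ 0 ∧ v j ≠ 0 ∧ v i ≠ v j := by
  rw [LinearIndepOn.pair_iff v hij]
  refine ⟨fun h => ⟨fun hi => ?_, fun hj => ?_, fun hij => ?_⟩, ?_⟩
  · simpa using h 1 0 (by simp [hi])
  · simpa using h 0 1 (by simp [hj])
  · simpa using h 1 1 (by simp [hij, ZModModule.add_self])
  · rintro ⟨hi, hj, hij⟩ c d hcd
    rcases zmod_two_eq_zero_or_eq_one c with rfl | rfl <;>
      rcases zmod_two_eq_zero_or_eq_one d with rfl | rfl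
    · simp
    · exact absurd (by simpa using hcd) hj
    · exact absurd (by simpa using hcd) hi
    · exact absurd (ZModModule.add_eq_zero_iff_eq.1 (by simpa using hcd)) hij

lemma LinearIndepOn.eq_add_of_not_linearIndepOn_insert {u : ι → W} {i j k : ι}
    (hij : LinearIndepOn (ZMod 2) u {i, j}) (hk : u k ≠ 0) (hki : u k ≠ u i) (hkj : u k ≠ u j)
    (hdep : ¬ LinearIndepOn (ZMod 2) u (insert k {i, j})) : u k = u i + u j := by
  have hmem : u k ∈ span (ZMod 2) (u '' {i, j}) := hij.mem_span_iff.2 fun h => (hdep h).elim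
  rw [Set.image_pair, mem_span_pair] at hmem
  obtain ⟨a, b, hab⟩ := hmem
  rcases zmod_two_eq_zero_or_eq_one a with rfl | rfl <;>
    rcases zmod_two_eq_zero_or_eq_one b with rfl | rfl
  · exact absurd (by simpa using hab.symm) hk
  · exact absurd (by simpa using hab.symm) hkj
  · exact absurd (by simpa using hab.symm) hki
  · simpa using hab.symm

lemma eq_add_of_linearMatroid_eq [Finite ι] {W' : Type*} [AddCommGroup W'] [Module (ZMod 2) W']
    {u : ι → W} {v : ι → W'}
    (h : linearMatroid (ZMod 2) u = linearMatroid (ZMod 2) v) {i j k : ι}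
    (hi : v i ≠ 0) (hj : v j ≠ 0) (hij : v i ≠ v j) (hk : v k = v i + v j) :
    u k = u i + u j := by
  have hindep : ∀ S, LinearIndepOn (ZMod 2) u S ↔ LinearIndepOn (ZMod 2) v S := fun S => by
    rw [← linearMatroid_indep_iff, h, linearMatroid_indep_iff]
  have hk0 : v k ≠ 0 := by rwa [hk, Ne, ZModModule.add_eq_zero_iff_eq]
  have hki : v k ≠ v i := by rwa [hk, Ne, add_eq_left]
  have hkj : v k ≠ v j := by rwa [hk, Ne, add_eq_right]
  have hpair : ∀ {a b : ι}, v a ≠ 0 → v b ≠ 0 → v a ≠ v b →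
      u a ≠ 0 ∧ u b ≠ 0 ∧ u a ≠ u b := fun ha hb hab => by
    have hne : _ ≠ _ := fun h => hab (congrArg v h)
    rw [← linearIndepOn_pair_iff_zmod_two hne, hindep, linearIndepOn_pair_iff_zmod_two hne]
    exact ⟨ha, hb, hab⟩
  have hdep : ¬ LinearIndepOn (ZMod 2) v (insert k {i, j}) := by
    have hkij : k ∉ ({i, j} : Set ι) := by
      rintro (rfl | rfl)
      exacts [hki rfl, hkj rfl]
    rw [linearIndepOn_insert hkij, Set.image_pair, hk]
    exact fun h => h.2 (add_mem (subset_span (by simp)) (subset_span (by simp)))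
  obtain ⟨hu0, -, huki⟩ := hpair hk0 hi hki
  obtain ⟨-, -, hukj⟩ := hpair hk0 hj hkj
  have hij' : i ≠ j := fun h => hij (congrArg v h)
  exact ((hindep _).2 ((linearIndepOn_pair_iff_zmod_two hij').2 ⟨hi, hj, hij⟩))
    |>.eq_add_of_not_linearIndepOn_insert hu0 huki hukj (by rwa [hindep])

end ZModTwo

section EdgeVector

open Finset

variable {V : Type*} [Fintype V]

def IsEdgeVector (x : V → ZMod 2) : Prop := #{w | x w ≠ 0} = 2

instance (x : V → ZMod 2) : Decidable (IsEdgeVector x) := inferInstanceAs (Decidable (_ = _))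

lemma isEdgeVector_iff {x : V → ZMod 2} :
    IsEdgeVector x ↔ ∃ u v, u ≠ v ∧ {w | x w ≠ 0} = ({u, v} : Set V) := by
  classical
  simp only [IsEdgeVector, card_eq_two, ← coe_inj, coe_filter_univ, coe_pair]

lemma card_add_ne_zero_add_two_mul (x y : V → ZMod 2) :
    #{w | (x + y) w ≠ 0} + 2 * #{w | x w ≠ 0 ∧ y w ≠ 0} = #{w | x w ≠ 0} + #{w | y w ≠ 0} := by
  simp only [card_filter, mul_sum, ← sum_add_distrib]
  refine sum_congr rfl fun w _ => ?_
  have key : ∀ a b : ZMod 2, ((if a + b ≠ 0 then 1 else 0) +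
      2 * if a ≠ 0 ∧ b ≠ 0 then 1 else 0) = (if a ≠ 0 then 1 else 0) + if b ≠ 0 then 1 else 0 := by
    decide
  exact key (x w) (y w)

lemma dotProduct_eq_card (x y : V → ZMod 2) :
    x ⬝ᵥ y = #{w | x w ≠ 0 ∧ y w ≠ 0} := by
  simp only [dotProduct, card_filter, Nat.cast_sum]
  refine sum_congr rfl fun w _ => ?_
  have key : ∀ a b : ZMod 2, a * b = ((if a ≠ 0 ∧ b ≠ 0 then 1 else 0 : ℕ) : ZMod 2) := by
    decide
  exact key (x w) (y w)

lemma IsEdgeVector.dotProduct_eq_one {x y : V → ZMod 2} (hx : IsEdgeVector x)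
    (hy : IsEdgeVector y) (hxy : IsEdgeVector (x + y)) : x ⬝ᵥ y = 1 := by
  have h := card_add_ne_zero_add_two_mul x y
  rw [hx, hy, hxy] at h
  rw [dotProduct_eq_card, show #{w | x w ≠ 0 ∧ y w ≠ 0} = 1 by omega, Nat.cast_one]

theorem IsEdgeVector.not_fano {a b c : V → ZMod 2} (ha : IsEdgeVector a) (hb : IsEdgeVector b)
    (hc : IsEdgeVector c) (hab : IsEdgeVector (a + b)) (hac : IsEdgeVector (a + c))
    (hbc : IsEdgeVector (b + c)) (habc : IsEdgeVector (a + b + c)) : False := by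
  have h := hab.dotProduct_eq_one hc habc
  rw [add_dotProduct, ha.dotProduct_eq_one hc hac, hb.dotProduct_eq_one hc hbc] at h
  exact absurd h (by decide)

end EdgeVector

section RankPreserving

variable {K W W' ι β : Type*} [Field K] [AddCommGroup W] [Module K W]
  [AddCommGroup W'] [Module K W'] [Finite ι] {N : Matroid β} {v : ι → W'} {F : ι → β}

lemma IsRankPreserving.mem_ground (hF : IsRankPreserving (linearMatroid K v) N F) {i : ι}
    (hi : v i ≠ 0) : F i ∈ N.E := by
  refine Matroid.mem_ground_of_eRk_singleton_ne_zero ?_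
  rw [← Set.image_singleton, ← mRank_eq_eRk, hF _ (Set.subset_univ _), mRank_eq_eRk,
    linearMatroid_eRk, Set.image_singleton, finrank_span_singleton hi]
  exact one_ne_zero

lemma IsRankPreserving.linearMatroid_comp_eq {g : β → W}
    (hg : ∀ T ⊆ N.E, (spanRank K (g '' T) : ℕ∞) = mRank N T) (hv : ∀ i, v i ≠ 0)
    (hF : IsRankPreserving (linearMatroid K v) N F) :
    linearMatroid K (g ∘ F) = linearMatroid K v := by
  refine Matroid.ext_eRk rfl fun S => ?_
  have hS : F '' S ⊆ N.E := by
    rintro _ ⟨i, -, rfl⟩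
    exact hF.mem_ground (hv i)
  rw [linearMatroid_eRk, Set.image_comp, ← mRank_eq_eRk, ← hF S (Set.subset_univ S), ← hg _ hS]
  rfl

end RankPreserving

lemma IsRankPreserving.isEdgeVector_comp {ι β W : Type*} [Finite ι] [AddCommGroup W]
    [Module (ZMod 2) W] {V : Type} [Fintype V] {N : Matroid β} {g : β → V → ZMod 2}
    {v : ι → W} {F : ι → β}
    (hg : ∀ T ⊆ N.E, (spanRank (ZMod 2) (g '' T) : ℕ∞) = mRank N T)
    (hedge : ∀ e ∈ N.E, g e = 0 ∨ ∃ u v : V, u ≠ v ∧ {w | g e w ≠ 0} = {u, v})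
    (hv : ∀ i, v i ≠ 0) (hF : IsRankPreserving (linearMatroid (ZMod 2) v) N F) (i : ι) :
    IsEdgeVector (g (F i)) := by
  refine isEdgeVector_iff.2 <| (hedge _ (hF.mem_ground (hv i))).resolve_left fun h0 => ?_
  have hi : (linearMatroid (ZMod 2) v).Indep {i} := (linearIndepOn_singleton_iff _).2 (hv i)
  rw [← hF.linearMatroid_comp_eq hg hv, linearMatroid_indep_iff,
    linearIndepOn_singleton_iff] at hi
  exact hi h0

lemma isGraphic_linearMatroid {ι V : Type} [Finite ι] [Fintype V] (v : ι → V → ZMod 2)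
    (hv : ∀ i, IsEdgeVector (v i)) : IsGraphic (linearMatroid (ZMod 2) v) :=
  ⟨V, inferInstance, v, fun S _ => by rw [mRank_eq_eRk, linearMatroid_eRk]; rfl,
    fun e _ => Or.inr (isEdgeVector_iff.1 (hv e))⟩

section K4

def k4Edges : Fin 6 → Fin 4 → ZMod 2 :=
  ![![1, 1, 0, 0], ![0, 1, 1, 0], ![1, 0, 1, 0], ![1, 0, 0, 1], ![0, 1, 0, 1], ![0, 0, 1, 1]]

-- Elements `3` and `4` of `k4Edges` swapped: the last edge `23` now closes a triangle with the
-- edges `12, 13` (elements `1, 3`) instead of `02, 03` (elements `2, 3`). The prefixes of length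
-- five still agree, through the relabelling `k4Twist`.
def k4Edges' : Fin 6 → Fin 4 → ZMod 2 :=
  ![![1, 1, 0, 0], ![0, 1, 1, 0], ![1, 0, 1, 0], ![0, 1, 0, 1], ![1, 0, 0, 1], ![0, 0, 1, 1]]

def k4Twist : (Fin 4 → ZMod 2) →ₗ[ZMod 2] (Fin 4 → ZMod 2) :=
  LinearMap.id + (LinearMap.proj 3).smulRight ![1, 1, 0, 0]

lemma k4Twist_involutive : Function.Involutive k4Twist := by
  intro y
  have h3 : (![1, 1, 0, 0] : Fin 4 → ZMod 2) 3 = 0 := rfl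
  simp only [k4Twist, LinearMap.add_apply, LinearMap.id_apply, LinearMap.smulRight_apply,
    LinearMap.proj_apply, Pi.add_apply, Pi.smul_apply, h3, smul_zero, add_zero, add_assoc,
    ZModModule.add_self]

lemma prefixMatroid_k4Edges :
    prefixMatroid (by norm_num : 5 ≤ 6) (linearMatroid (ZMod 2) k4Edges) =
      prefixMatroid (by norm_num : 5 ≤ 6) (linearMatroid (ZMod 2) k4Edges') := by
  rw [prefixMatroid_linearMatroid, prefixMatroid_linearMatroid,
    ← linearMatroid_comp_linearMap _ k4Twist_involutive.injective]
  congr 1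
  funext i
  revert i
  decide

variable {W : Type*} [AddCommGroup W] [Module (ZMod 2) W]

lemma eq_add_of_linearMatroid_eq_k4Edges {u : Fin 6 → W}
    (hu : linearMatroid (ZMod 2) u = linearMatroid (ZMod 2) k4Edges) :
    u 2 = u 0 + u 1 ∧ u 4 = u 0 + u 3 ∧ u 5 = u 2 + u 3 :=
  ⟨eq_add_of_linearMatroid_eq hu (by decide) (by decide) (by decide) (by decide),
    eq_add_of_linearMatroid_eq hu (by decide) (by decide) (by decide) (by decide),
    eq_add_of_linearMatroid_eq hu (by decide) (by decide) (by decide) (by decide)⟩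

lemma eq_add_of_linearMatroid_eq_k4Edges' {u : Fin 6 → W}
    (hu : linearMatroid (ZMod 2) u = linearMatroid (ZMod 2) k4Edges') : u 5 = u 1 + u 3 :=
  eq_add_of_linearMatroid_eq hu (by decide) (by decide) (by decide) (by decide)

end K4

theorem not_OMMof_isGraphic_le_six {β : Type*} {N : Matroid β} (hN : IsGraphic N) :
    ¬ OMMof (fun m M => m ≤ 6 ∧ M.E = univ ∧ IsGraphic M) N := by
  obtain ⟨V, _, g, hg, hedge⟩ := hN
  rintro ⟨f, hrank, hpref⟩
  set M := linearMatroid (ZMod 2) k4Edges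
  set M' := linearMatroid (ZMod 2) k4Edges'
  have hM : 6 ≤ 6 ∧ M.E = univ ∧ IsGraphic M :=
    ⟨le_rfl, rfl, isGraphic_linearMatroid _ (by decide)⟩
  have hM' : 6 ≤ 6 ∧ M'.E = univ ∧ IsGraphic M' :=
    ⟨le_rfl, rfl, isGraphic_linearMatroid _ (by decide)⟩
  have hF : IsRankPreserving M N (f 6 M) := hrank 6 M hM
  have hF' : IsRankPreserving M' N (f 6 M') := hrank 6 M' hM'
  set u := g ∘ f 6 M
  set u' := g ∘ f 6 M'
  have hu : linearMatroid (ZMod 2) u = M := hF.linearMatroid_comp_eq hg (by decide)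
  have hu' : linearMatroid (ZMod 2) u' = M' := hF'.linearMatroid_comp_eq hg (by decide)
  have hedges : ∀ i, IsEdgeVector (u i) := hF.isEdgeVector_comp (g := g) hg hedge (by decide)
  have hedges' : ∀ i, IsEdgeVector (u' i) := hF'.isEdgeVector_comp (g := g) hg hedge (by decide)
  obtain ⟨h2, h4, h5⟩ := eq_add_of_linearMatroid_eq_k4Edges hu
  have h5' := eq_add_of_linearMatroid_eq_k4Edges' hu'
  have hagree : ∀ i : Fin 5, u' (Fin.castLE (by norm_num) i) = u (Fin.castLE (by norm_num) i) := by
    intro i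
    simp only [u, u', Function.comp_apply, ← hpref 5 6 (by norm_num) M hM,
      ← hpref 5 6 (by norm_num) M' hM', M, M', prefixMatroid_k4Edges]
  have h1 : u' 1 = u 1 := hagree 1
  have h3 : u' 3 = u 3 := hagree 3
  have hbc : IsEdgeVector (u 1 + u 3) := by rw [← h1, ← h3, ← h5']; exact hedges' 5
  have habc : IsEdgeVector (u 0 + u 1 + u 3) := by rw [← h2, ← h5]; exact hedges 5
  exact IsEdgeVector.not_fano (hedges 0) (hedges 1) (hedges 3) (h2 ▸ hedges 2) (h4 ▸ hedges 4)
    hbc habc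

/-- There is no graphic matroid `N` (on any type) admitting an online matroid embedding of
the class of all graphic matroids; in fact this already fails for the class of graphic
matroids with at most `6` elements. -/
theorem stmt7 :
    (∀ (β : Type*) (N : Matroid β), IsGraphic N →
      ¬ OMEof (fun _ M => M.E = univ ∧ IsGraphic M) N) ∧
    (∀ (β : Type*) (N : Matroid β), IsGraphic N →
      ¬ OMEof (fun m M => m ≤ 6 ∧ M.E = univ ∧ IsGraphic M) N) :=
  ⟨fun _ _ hN h => not_OMMof_isGraphic_le_six hN (h.toOMMof.mono fun _ _ hM => hM.2),
    fun _ _ hN h => not_OMMof_isGraphic_le_six hN h.toOMMof⟩
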